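/- Let A be a perfect MV-algebra. If x ≤ ¬x and y ≤ ¬y, then sup(x,y) ≤ ¬sup(x,y). That is, the radical {x : x ≤ ¬x} is closed under binary suprema. -/

import Mathlib

/-- An MV-algebra `(A, ⊕, ¬, 0)`. -/
class MV (A : Type*) where
  op : A → A → A
  neg : A → A
  zero : A
  op_assoc : ∀ x y z : A, op (op x y) z = op x (op y z)
  op_comm : ∀ x y : A, op x y = op y x
  op_zero : ∀ x : A, op x zero = x
  neg_neg : ∀ x : A, neg (neg x) = x
  op_neg_zero : ∀ x : A, op x (neg zero) = neg zero
  mv6 : ∀ x y : A, op (neg (op (neg x) y)) y = op (neg (op (neg y) x)) x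

namespace MV

variable {A : Type*} [MV A]

/-- `1 := ¬0`. -/
def one : A := neg zero

/-- `x ⊙ y := ¬(¬x ⊕ ¬y)`. -/
def odot (x y : A) : A := neg (op (neg x) (neg y))

/-- `sup(x,y) := (x ⊙ ¬y) ⊕ y`. -/
def ssup (x y : A) : A := op (odot x (neg y)) y

/-- `inf(x,y) := (x ⊕ ¬y) ⊙ y`. -/
def sinf (x y : A) : A := odot (op x (neg y)) y

/-- `x ≤ y` iff `¬x ⊕ y = 1`. -/
def le (x y : A) : Prop := op (neg x) y = one

/-- `x ≤ y` iff `inf(x,y) = x`. -/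
def leInf (x y : A) : Prop := sinf x y = x

/-- `n`-fold sum `nx = x ⊕ ⋯ ⊕ x`. -/
def nsm : ℕ → A → A
  | 0, _ => zero
  | n + 1, x => op x (nsm n x)

/-- `x² := x ⊙ x`. -/
def sq (x : A) : A := odot x x

end MV

namespace MV

/-- A perfect MV-algebra: nontrivial, satisfying `x² ⊕ x² = (x ⊕ x)²` and,
for every `x`, either `x ≤ ¬x` or `¬x ≤ x`. -/
def Perfect (A : Type*) [MV A] : Prop :=
  (zero : A) ≠ one ∧
  (∀ x : A, op (sq x) (sq x) = sq (op x x)) ∧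
  (∀ x : A, le x (neg x) ∨ le (neg x) x)

end MV

/-!
The radical `{x | x ≤ ¬x} = {x | x² = 0}` is downward closed and `sup(x,y) ≤ x ⊕ y`, so it
suffices that `x ⊕ y` lies in the radical. Otherwise, by the dichotomy, `2x ⊕ 2y = 1`; the identity
`(2x)² = x² ⊕ x²` puts `2x` and `2y` in the radical, so `¬2x ≤ 2y ≤ ¬2y ≤ 2x`, i.e. `4x = 1`.
Squaring once more gives `1 = (4x)² = (2x)² ⊕ (2x)² = 0`, contradicting nontriviality.
-/

namespace MV

variable {A : Type*} [MV A]

instance : Std.Associative (op : A → A → A) := ⟨op_assoc⟩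

instance : Std.Commutative (op : A → A → A) := ⟨op_comm⟩

theorem zero_op (x : A) : op zero x = x := by rw [op_comm, op_zero]

theorem op_one (x : A) : op x one = one := op_neg_zero x

theorem neg_one : (neg one : A) = zero := neg_neg zero

theorem sq_one : sq (one : A) = one := by
  rw [sq, odot, neg_one, op_zero]; rfl

theorem neg_op_self (x : A) : op (neg x) x = one := by
  simpa only [op_one, neg_one, zero_op] using (mv6 x (one : A)).symm

theorem ssup_eq_left_of_le {x y : A} (h : le x y) : ssup y x = y := by
  have h6 := mv6 x y
  rw [show op (neg x) y = one from h, neg_one, zero_op] at h6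
  rw [ssup, odot, neg_neg]
  exact h6.symm

theorem le_trans {x y z : A} (hxy : le x y) (hyz : le y z) : le x z := by
  rw [le, ← ssup_eq_left_of_le hyz, ssup, odot, neg_neg, ← op_assoc, op_comm (neg x),
    op_assoc, hxy, op_one]

theorem op_le_op_right {x y : A} (h : le x y) (z : A) : le (op x z) (op y z) := by
  rw [le, ← ssup_eq_left_of_le h, ssup, odot, neg_neg, op_assoc _ x z]
  calc op (neg (op x z)) (op (neg (op (neg y) x)) (op x z))
      = op (neg (op (neg y) x)) (op (neg (op x z)) (op x z)) := by ac_rfl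
    _ = one := by rw [neg_op_self, op_one]

theorem odot_le_left (x y : A) : le (odot x y) x := by
  rw [le, odot, neg_neg, op_assoc, op_comm (neg y), ← op_assoc, neg_op_self, op_comm, op_one]

theorem ssup_le_op (x y : A) : le (ssup x y) (op x y) :=
  op_le_op_right (odot_le_left x (neg y)) y

theorem neg_le_neg {x y : A} (h : le x y) : le (neg y) (neg x) := by
  rwa [le, neg_neg, op_comm]

theorem le_neg_self_iff {x : A} : le x (neg x) ↔ sq x = zero := by
  rw [le, sq, odot]
  constructor
  · intro h; rw [h, neg_one]
  · intro h; rw [← neg_neg (op (neg x) (neg x)), h]; rfl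

theorem neg_le_self_iff {x : A} : le (neg x) x ↔ op x x = one := by
  rw [le, neg_neg]

theorem le_neg_self_of_le {x y : A} (hxy : le x y) (hy : le y (neg y)) : le x (neg x) :=
  le_trans hxy (le_trans hy (neg_le_neg hxy))

theorem neg_le_self_of_op_eq_one {x y : A} (hy : le y (neg y)) (h : op x y = one) :
    le (neg x) x :=
  le_trans (show le (neg x) y by rwa [le, neg_neg]) (le_trans hy (by rwa [le, neg_neg, op_comm]))

theorem op_self_le_neg_op_self (hsq : ∀ x : A, op (sq x) (sq x) = sq (op x x)) {x : A}
    (hx : le x (neg x)) : le (op x x) (neg (op x x)) := by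
  rw [le_neg_self_iff] at hx ⊢
  rw [← hsq, hx, op_zero]

theorem op_self_ne_one (hsq : ∀ x : A, op (sq x) (sq x) = sq (op x x)) (hnt : (zero : A) ≠ one)
    {x : A} (hx : le x (neg x)) : op x x ≠ one := by
  intro hxx
  apply hnt
  rw [← sq_one, ← hxx, ← hsq, le_neg_self_iff.mp hx, op_zero]

theorem Perfect.op_le_neg_op (hA : Perfect A) {x y : A} (hx : le x (neg x)) (hy : le y (neg y)) :
    le (op x y) (neg (op x y)) := by
  obtain ⟨hnt, hsq, hcmp⟩ := hA
  refine (hcmp (op x y)).resolve_right fun hw => ?_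
  have hxxyy : op (op x x) (op y y) = one := by
    rw [← neg_le_self_iff.mp hw]; ac_rfl
  exact op_self_ne_one hsq hnt (op_self_le_neg_op_self hsq hx)
    (neg_le_self_iff.mp (neg_le_self_of_op_eq_one (op_self_le_neg_op_self hsq hy) hxxyy))

end MV

open MV in
/-- In a perfect MV-algebra, the radical `{x : x ≤ ¬x}` is closed under binary suprema. -/
theorem perfect_radical_sup_closed {A : Type*} [MV A] (hA : Perfect A) :
    ∀ x y : A, le x (neg x) → le y (neg y) → le (ssup x y) (neg (ssup x y)) := fun x y hx hy =>
  le_neg_self_of_le (ssup_le_op x y) (hA.op_le_neg_op hx hy)
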